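/- arXiv:1206.5359 — 11 statements merged into one kernel-verified Lean document; each statement's English description precedes it below -/
import Mathlib

section
/- The set A of nonnegative integers obtained by the greedy algorithm avoiding three-term arithmetic progressions (recursively include n if and only if there are no x < y < n already in A with x + n = 2y) is exactly the set of nonnegative integers whose base-3 expansion uses only the digits 0 and 1. -/
/-- The greedy set avoiding three-term arithmetic progressions:
`n` is included iff there are no `x < y < n` already in the set with `x + n = 2 * y`. -/
def greedyA : ℕ → Prop
  | n => ¬ ∃ x, ∃ y, ∃ _ : x < y, ∃ _ : y < n, greedyA x ∧ greedyA y ∧ x + n = 2 * y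
termination_by n => n
decreasing_by all_goals omega

/-!
Write `T` for the integers whose ternary digits are all `0` or `1`. Adding two elements of `T`
produces no carries, so `x + z = 2 * y` with `x, y, z ∈ T` forces `x = z` digit by digit: `T` has
no three-term progression. Conversely every `n` equals `2 * y - x` with `x, y ∈ T`, where `y`
(resp. `x`) is obtained from `n` by replacing each digit `2` by `1` (resp. `0`); if `n ∉ T` then
`x < y < n`, so `n` completes a progression in `T`. Hence `T` satisfies the recursion defining
`greedyA`, which determines its solution uniquely.
-/

def AvoidsAPWith (S : ℕ → Prop) (n : ℕ) : Prop :=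
  ¬ ∃ x, ∃ y, ∃ _ : x < y, ∃ _ : y < n, S x ∧ S y ∧ x + n = 2 * y

theorem greedyA_iff (n : ℕ) : greedyA n ↔ AvoidsAPWith greedyA n := by
  rw [greedyA, AvoidsAPWith]

theorem iff_greedyA_of_forall_iff {S : ℕ → Prop} (hS : ∀ n, S n ↔ AvoidsAPWith S n) (n : ℕ) :
    S n ↔ greedyA n := by
  induction n using Nat.strong_induction_on with
  | _ n ih =>
    rw [hS, greedyA_iff, AvoidsAPWith, AvoidsAPWith]
    refine not_congr (exists_congr fun x => exists_congr fun y => ?_)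
    exact exists_congr fun hxy => exists_congr fun hyn => by
      rw [ih x (hxy.trans hyn), ih y hyn]

def Ternary01 (n : ℕ) : Prop := ∀ c ∈ Nat.digits 3 n, c ≤ 1

theorem ternary01_iff (n : ℕ) : Ternary01 n ↔ n % 3 ≤ 1 ∧ Ternary01 (n / 3) := by
  rcases Nat.eq_zero_or_pos n with rfl | hn
  · simp [Ternary01]
  · simp only [Ternary01, Nat.digits_def' (by norm_num : 1 < 3) hn, List.forall_mem_cons]

theorem ternary01_three_mul_add_iff {d : ℕ} (hd : d ≤ 1) (m : ℕ) :
    Ternary01 (3 * m + d) ↔ Ternary01 m := by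
  rw [ternary01_iff, show (3 * m + d) % 3 = d by omega, show (3 * m + d) / 3 = m by omega]
  exact and_iff_right hd

theorem Ternary01.eq_of_add_eq_two_mul {x y z : ℕ} (hx : Ternary01 x) (hy : Ternary01 y)
    (hz : Ternary01 z) (h : x + z = 2 * y) : x = z := by
  induction y using Nat.strong_induction_on generalizing x z with
  | _ y ih =>
    rcases Nat.eq_zero_or_pos y with rfl | hy0
    · omega
    obtain ⟨hx1, hx⟩ := (ternary01_iff x).mp hx
    obtain ⟨hy1, hy⟩ := (ternary01_iff y).mp hy
    obtain ⟨hz1, hz⟩ := (ternary01_iff z).mp hz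
    -- no carry, as `x % 3 + z % 3 ≤ 2 < 3`: the quotients by `3` satisfy the same relation
    have := ih (y / 3) (Nat.div_lt_self hy0 (by norm_num)) hx hy hz (by omega)
    omega

theorem exists_ternary01_add_eq_two_mul (n : ℕ) :
    ∃ x y, Ternary01 x ∧ Ternary01 y ∧ x + n = 2 * y ∧ y ≤ n ∧ (¬ Ternary01 n → y < n) := by
  induction n using Nat.strong_induction_on with
  | _ n ih =>
    rcases Nat.eq_zero_or_pos n with rfl | hn
    · exact ⟨0, 0, by simp [Ternary01]⟩
    obtain ⟨x, y, hx, hy, hxy, hyn, hlt⟩ := ih (n / 3) (Nat.div_lt_self hn (by norm_num))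
    by_cases hr : n % 3 ≤ 1
    · have hn' : Ternary01 n ↔ Ternary01 (n / 3) := by
        rw [ternary01_iff]; exact and_iff_right hr
      refine ⟨3 * x + n % 3, 3 * y + n % 3, (ternary01_three_mul_add_iff hr x).mpr hx,
        (ternary01_three_mul_add_iff hr y).mpr hy, by omega, by omega, fun h => ?_⟩
      have := hlt (hn'.not.mp h)
      omega
    · refine ⟨3 * x + 0, 3 * y + 1, (ternary01_three_mul_add_iff zero_le_one x).mpr hx,
        (ternary01_three_mul_add_iff le_rfl y).mpr hy, by omega, by omega, fun _ => by omega⟩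

theorem ternary01_iff_avoidsAPWith (n : ℕ) : Ternary01 n ↔ AvoidsAPWith Ternary01 n := by
  refine ⟨?_, fun h => by_contra fun hn => h ?_⟩
  · rintro hn ⟨x, y, hxy, -, hx, hy, h⟩
    exact hxy.ne (by have := hx.eq_of_add_eq_two_mul hy hn h; omega)
  · obtain ⟨x, y, hx, hy, h, -, hyn⟩ := exists_ternary01_add_eq_two_mul n
    exact ⟨x, y, by have := hyn hn; omega, hyn hn, hx, hy, h⟩

/-- The greedy 3-AP-avoiding set is exactly the set of nonnegative integers whose
base-3 expansion uses only the digits 0 and 1. -/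
theorem greedyA_eq_digits01 (n : ℕ) :
    greedyA n ↔ ∀ c ∈ Nat.digits 3 n, c ≤ 1 :=
  (iff_greedyA_of_forall_iff ternary01_iff_avoidsAPWith n).symm
end

section
/- The set of nonnegative integers whose base-3 expansion uses only digits 0 and 1 contains no nontrivial three-term arithmetic progression: if x, y, z all have only digits 0 and 1 in base 3, x < y, and x + z = 2y, then y = z. -/
/-!
With all digits in {0, 1} and base at least 3, adding x + z and doubling y produce no carries,
so x + z = 2y holds digit by digit. A digit equation a + c = 2b with a, b, c ∈ {0, 1}
forces a = b = c, hence x = y = z.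
-/

namespace Nat

variable {b k n : ℕ}

theorem mod_le_of_forall_digits_le (hb : 1 < b) (h : ∀ c ∈ b.digits n, c ≤ k) : n % b ≤ k := by
  rcases n.eq_zero_or_pos with rfl | hn
  · simp
  · exact h _ (by rw [digits_def' hb hn]; exact List.mem_cons_self)

theorem forall_digits_div_le (hb : 1 < b) (h : ∀ c ∈ b.digits n, c ≤ k) :
    ∀ c ∈ b.digits (n / b), c ≤ k := by
  rcases n.eq_zero_or_pos with rfl | hn
  · simp
  · exact fun c hc ↦ h c (by rw [digits_def' hb hn]; exact List.mem_cons_of_mem _ hc)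

theorem mod_eq_and_div_add_div_of_add_eq_two_mul {x y z : ℕ} (hb : 3 ≤ b)
    (hx : x % b ≤ 1) (hy : y % b ≤ 1) (hz : z % b ≤ 1) (hap : x + z = 2 * y) :
    x % b = y % b ∧ z % b = y % b ∧ x / b + z / b = 2 * (y / b) := by
  -- both sides are at most 2 < b, so their congruence mod b is an equality
  have hmod : x % b + z % b = 2 * (y % b) := by
    have hsum : (x + z) % b = x % b + z % b := by rw [add_mod, mod_eq_of_lt (by omega)]
    have hdbl : 2 * y % b = 2 * (y % b) := by
      rw [mul_mod, mod_eq_of_lt (a := 2) (by omega), mod_eq_of_lt (by omega)]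
    rw [← hsum, ← hdbl, hap]
  refine ⟨by omega, by omega, Nat.eq_of_mul_eq_mul_left (by omega : 0 < b) ?_⟩
  have := div_add_mod x b; have := div_add_mod y b; have := div_add_mod z b
  linarith

theorem eq_of_add_eq_two_mul_of_digits_le_one (hb : 3 ≤ b) {x y z : ℕ}
    (hx : ∀ c ∈ b.digits x, c ≤ 1) (hy : ∀ c ∈ b.digits y, c ≤ 1)
    (hz : ∀ c ∈ b.digits z, c ≤ 1) (hap : x + z = 2 * y) : x = y ∧ z = y := by
  induction y using Nat.strong_induction_on generalizing x z with
  | _ y ih =>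
  rcases y.eq_zero_or_pos with rfl | hy0
  · omega
  have hb1 : 1 < b := by omega
  obtain ⟨hxy_mod, hzy_mod, hdiv⟩ := mod_eq_and_div_add_div_of_add_eq_two_mul hb
    (mod_le_of_forall_digits_le hb1 hx) (mod_le_of_forall_digits_le hb1 hy)
    (mod_le_of_forall_digits_le hb1 hz) hap
  obtain ⟨hxy_div, hzy_div⟩ := ih (y / b) (div_lt_self hy0 hb1) (forall_digits_div_le hb1 hx)
    (forall_digits_div_le hb1 hy) (forall_digits_div_le hb1 hz) hdiv
  exact ⟨by rw [← div_add_mod x b, ← div_add_mod y b, hxy_mod, hxy_div],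
    by rw [← div_add_mod z b, ← div_add_mod y b, hzy_mod, hzy_div]⟩

end Nat

theorem digits01_no_threeAP_general (x y z : ℕ)
    (hx : ∀ c ∈ Nat.digits 3 x, c ≤ 1)
    (hy : ∀ c ∈ Nat.digits 3 y, c ≤ 1)
    (hz : ∀ c ∈ Nat.digits 3 z, c ≤ 1)
    (hap : x + z = 2 * y) : y = z :=
  (Nat.eq_of_add_eq_two_mul_of_digits_le_one le_rfl hx hy hz hap).2.symm

/-- The set of nonnegative integers whose base-3 expansion uses only digits 0 and 1
contains no nontrivial three-term arithmetic progression. -/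
theorem digits01_no_threeAP (x y z : ℕ)
    (hx : ∀ c ∈ Nat.digits 3 x, c ≤ 1)
    (hy : ∀ c ∈ Nat.digits 3 y, c ≤ 1)
    (hz : ∀ c ∈ Nat.digits 3 z, c ≤ 1)
    (hxy : x < y) (hap : x + z = 2 * y) : y = z :=
  digits01_no_threeAP_general x y z hx hy hz hap
end

section
/- Let A ⊆ ℕ. If there exists a ∉ A such that for every b ∈ A with b < a there exist x, y ∈ A with y − x = a − b, then there is no subtraction set S ⊆ ℕ₊ for which A equals the set of P-positions of the subtraction game with subtraction set S. -/
/-!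
If `A` were the set of P-positions of a game with subtraction set `S`, the N-position `a ∉ A`
would have a move `a → a - s` to some `b = a - s ∈ A`. The hypothesis gives `x, y ∈ A` with
`y = x + s`, so the move `y → x` joins two P-positions, which is impossible.
-/

/-- P-positions of the subtraction game with subtraction set `S`:
`x` is a P-position iff every move `x → x - s` (for `s ∈ S`, `0 < s ≤ x`) leads to a
non-P-position. -/
def subP (S : Set ℕ) : ℕ → Prop
  | x => ∀ s, s ∈ S → ∀ _ : 0 < s, ∀ _ : s ≤ x, ¬ subP S (x - s)
termination_by x => x
decreasing_by all_goals omega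

theorem subP_iff {S : Set ℕ} {x : ℕ} :
    subP S x ↔ ∀ s ∈ S, 0 < s → s ≤ x → ¬ subP S (x - s) := by
  rw [subP]

theorem exists_move_to_subP_of_not_subP {S : Set ℕ} {x : ℕ} (hx : ¬ subP S x) :
    ∃ s ∈ S, 0 < s ∧ s ≤ x ∧ subP S (x - s) := by
  rw [subP_iff] at hx
  push Not at hx
  exact hx

theorem not_subP_add_of_subP {S : Set ℕ} {x s : ℕ} (hs : s ∈ S) (hs₀ : 0 < s)
    (hx : subP S x) : ¬ subP S (x + s) := fun hxs =>
  subP_iff.mp hxs s hs hs₀ (Nat.le_add_left s x) (by rwa [Nat.add_sub_cancel])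

/-- If there is an `a ∉ A` such that every `b ∈ A` with `b < a` admits `x, y ∈ A` with
`y - x = a - b`, then `A` is not the set of P-positions of any subtraction game. -/
theorem no_subtraction_game (A : Set ℕ)
    (h : ∃ a ∉ A, ∀ b ∈ A, b < a → ∃ x ∈ A, ∃ y ∈ A, x + (a - b) = y) :
    ¬ ∃ S : Set ℕ, (∀ s ∈ S, 0 < s) ∧ (∀ x, x ∈ A ↔ subP S x) := by
  rintro ⟨S, -, hA⟩
  obtain ⟨a, haA, hdiff⟩ := h
  obtain ⟨s, hs, hs₀, hsa, hmove⟩ :=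
    exists_move_to_subP_of_not_subP fun ha => haA ((hA a).mpr ha)
  obtain ⟨x, hx, y, hy, rfl⟩ := hdiff (a - s) ((hA _).mpr hmove) (by omega)
  rw [Nat.sub_sub_self hsa] at hy
  exact not_subP_add_of_subP hs hs₀ ((hA x).mp hx) ((hA _).mp hy)
end

section
/- There is no subtraction game whose set of P-positions is the set A of nonnegative integers with only digits 0 and 1 in base 3. (Concretely: a = 2 ∉ A, and for every b ∈ {0, 1} there exist x, y ∈ A with y − x = 2 − b.) -/
theorem sub_notMem_of_subP {S : Set ℕ} {x y : ℕ} (hx : subP S x) (hy : subP S y) (hxy : x < y) :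
    y - x ∉ S := fun hs =>
  subP_iff.mp hy (y - x) hs (by omega) (by omega) (by rwa [Nat.sub_sub_self hxy.le])

theorem exists_subP_sub_mem_of_not_subP {S : Set ℕ} {a : ℕ} (ha : ¬ subP S a) :
    ∃ b < a, subP S b ∧ a - b ∈ S := by
  rw [subP_iff] at ha
  push Not at ha
  obtain ⟨s, hs, hpos, hsa, hP⟩ := ha
  exact ⟨a - s, by omega, hP, by rwa [Nat.sub_sub_self hsa]⟩

/-- There is no subtraction game whose P-positions are exactly the nonnegative
integers with only digits 0 and 1 in base 3. -/
theorem no_subtraction_game_digits01 :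
    ¬ ∃ S : Set ℕ, (∀ s ∈ S, 0 < s) ∧
      (∀ x, subP S x ↔ ∀ c ∈ Nat.digits 3 x, c ≤ 1) := by
  rintro ⟨S, -, hiff⟩
  have h1 : subP S 1 := (hiff 1).mpr (by simp)
  have h3 : subP S 3 := (hiff 3).mpr (by simp)
  have h4 : subP S 4 := (hiff 4).mpr (by simp)
  have h2 : ¬ subP S 2 := fun h => by simpa [Nat.digits_def'] using (hiff 2).mp h
  obtain ⟨b, hb, -, hmove⟩ := exists_subP_sub_mem_of_not_subP h2
  interval_cases b
  · exact sub_notMem_of_subP h1 h3 (by norm_num) hmove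
  · exact sub_notMem_of_subP h3 h4 (by norm_num) hmove
end

section
/- Define the outcome function for the comply-number game with move family S ⊆ Finset ℕ₊ recursively: a heap x is a P-position iff for every s ∈ S with max s ≤ x there exists s_i ∈ s with x − s_i an N-position (N = not P). Then for S = { {d, 2d} : d ∈ ℕ₊ }, the set of P-positions is exactly the set of nonnegative integers whose base-3 digits are all 0 or 1. -/
/-- P-positions of the comply-number game defined by a family `S` of finite sets of
positive integers: `x` is a P-position iff for every applicable move set `s ∈ S`
(i.e. `max s ≤ x`) there is some `i ∈ s` with `x - i` an N-position. -/
def complyNumP (S : Set (Finset ℕ)) : ℕ → Prop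
  | x => ∀ s, s ∈ S → (∀ i ∈ s, i ≤ x) →
      ∃ i, ∃ _ : i ∈ s, ∃ _ : 0 < i, ∃ _ : i ≤ x, ¬ complyNumP S (x - i)
termination_by x => x
decreasing_by all_goals omega

/-!
A heap `x` is a P-position iff it is not the top `a + 2d` of a progression `a, a + d, a + 2d`
(`d > 0`) whose two lower terms are P-positions. Hence any set `A` that contains no nontrivial
three-term progression, and such that every `x ∉ A` tops a progression with lower terms in `A`,
is the set of P-positions. The numbers with ternary digits in `{0, 1}` are such a set: in
`u + v = 2w` the last digits must agree, so no carry occurs and `u = v` follows digit by digit;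
and a progression below any other number is built from one below `x / 3`, digit by digit.
-/

def threeAPMoves : Set (Finset ℕ) := {s | ∃ d : ℕ, 0 < d ∧ s = {d, 2 * d}}

theorem complyNumP_threeAPMoves_iff (x : ℕ) :
    complyNumP threeAPMoves x ↔ ∀ a d, 0 < d → a + 2 * d = x →
      ¬ (complyNumP threeAPMoves a ∧ complyNumP threeAPMoves (a + d)) := by
  rw [complyNumP]
  constructor
  · rintro h a d hd rfl ⟨ha, had⟩
    obtain ⟨i, hi, -, -, hP⟩ := h {d, 2 * d} ⟨d, hd, rfl⟩ (by simp; omega)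
    simp only [Finset.mem_insert, Finset.mem_singleton] at hi
    rcases hi with rfl | rfl
    · exact hP (by rwa [show a + 2 * i - i = a + i by omega])
    · exact hP (by rwa [Nat.add_sub_cancel])
  · rintro h _ ⟨d, hd, rfl⟩ hx
    have h2d : 2 * d ≤ x := hx _ (by simp)
    obtain ⟨a, rfl⟩ : ∃ a, x = a + 2 * d := ⟨x - 2 * d, by omega⟩
    rcases not_and_or.1 (h a d hd rfl) with hP | hP
    · exact ⟨2 * d, by simp, by omega, h2d, by rwa [Nat.add_sub_cancel]⟩
    · exact ⟨d, by simp, hd, by omega, by rwa [show a + 2 * d - d = a + d by omega]⟩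

theorem complyNumP_threeAPMoves_iff_of_greedy (A : ℕ → Prop)
    (hfree : ∀ a d, A a → A (a + d) → A (a + 2 * d) → d = 0)
    (hcover : ∀ x, ¬ A x → ∃ a d, 0 < d ∧ A a ∧ A (a + d) ∧ a + 2 * d = x) (x : ℕ) :
    complyNumP threeAPMoves x ↔ A x := by
  induction x using Nat.strong_induction_on with
  | _ x ih =>
    rw [complyNumP_threeAPMoves_iff]
    have ih₂ : ∀ a d, 0 < d → a + 2 * d = x →
        (complyNumP threeAPMoves a ∧ complyNumP threeAPMoves (a + d) ↔ A a ∧ A (a + d)) :=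
      fun a d hd hx ↦ and_congr (ih a (by omega)) (ih (a + d) (by omega))
    by_cases hx : A x
    · refine iff_of_true (fun a d hd hadx hP ↦ ?_) hx
      obtain ⟨ha, had⟩ := (ih₂ a d hd hadx).1 hP
      exact hd.ne' (hfree a d ha had (hadx ▸ hx))
    · refine iff_of_false (fun h ↦ ?_) hx
      obtain ⟨a, d, hd, ha, had, rfl⟩ := hcover x hx
      exact h a d hd rfl ((ih₂ a d hd rfl).2 ⟨ha, had⟩)

def TernaryZeroOne (x : ℕ) : Prop := ∀ c ∈ Nat.digits 3 x, c ≤ 1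

theorem ternaryZeroOne_zero : TernaryZeroOne 0 := by simp [TernaryZeroOne]

theorem ternaryZeroOne_iff (x : ℕ) :
    TernaryZeroOne x ↔ x % 3 ≤ 1 ∧ TernaryZeroOne (x / 3) := by
  rcases Nat.eq_zero_or_pos x with rfl | hx
  · simp [ternaryZeroOne_zero]
  · rw [TernaryZeroOne, Nat.digits_def' (by norm_num) hx]
    simp [TernaryZeroOne]

theorem ternaryZeroOne_three_mul_add {r : ℕ} (hr : r < 3) (q : ℕ) :
    TernaryZeroOne (3 * q + r) ↔ r ≤ 1 ∧ TernaryZeroOne q := by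
  rw [ternaryZeroOne_iff, show (3 * q + r) / 3 = q by omega, show (3 * q + r) % 3 = r by omega]

theorem ternaryZeroOne_three_mul (q : ℕ) : TernaryZeroOne (3 * q) ↔ TernaryZeroOne q := by
  simpa using ternaryZeroOne_three_mul_add (r := 0) (by norm_num) q

theorem TernaryZeroOne.eq_of_add_eq_two_mul {u v w : ℕ} (hu : TernaryZeroOne u)
    (hv : TernaryZeroOne v) (hw : TernaryZeroOne w) (h : u + v = 2 * w) : u = v := by
  induction w using Nat.strong_induction_on generalizing u v with
  | _ w ih =>
    rcases Nat.eq_zero_or_pos w with rfl | hw0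
    · omega
    rw [ternaryZeroOne_iff] at hu hv hw
    -- the last digits satisfy `u₀ + v₀ ≡ 2 w₀ [MOD 3]` and lie in `{0, 1}`, so they all agree
    have hdiv : u % 3 = v % 3 ∧ u / 3 + v / 3 = 2 * (w / 3) := by omega
    have := ih (w / 3) (by omega) hu.2 hv.2 hw.2 hdiv.2
    omega

theorem exists_ap_of_not_ternaryZeroOne {x : ℕ} (hx : ¬ TernaryZeroOne x) :
    ∃ a d, 0 < d ∧ TernaryZeroOne a ∧ TernaryZeroOne (a + d) ∧ a + 2 * d = x := by
  induction x using Nat.strong_induction_on with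
  | _ x ih =>
    obtain ⟨q, r, hr, rfl⟩ : ∃ q r, r < 3 ∧ 3 * q + r = x := ⟨x / 3, x % 3, by omega, by omega⟩
    rw [ternaryZeroOne_three_mul_add hr] at hx
    by_cases hq : TernaryZeroOne q
    · have hr2 : r = 2 := by
        have : ¬ r ≤ 1 := fun h ↦ hx ⟨h, hq⟩
        omega
      subst hr2
      exact ⟨3 * q, 1, one_pos, (ternaryZeroOne_three_mul q).2 hq,
        (ternaryZeroOne_three_mul_add (by norm_num) q).2 ⟨le_rfl, hq⟩, by ring⟩
    · have hq0 : q ≠ 0 := by rintro rfl; exact hq ternaryZeroOne_zero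
      obtain ⟨a, d, hd, ha, had, rfl⟩ := ih q (by omega) hq
      by_cases hr1 : r ≤ 1
      · refine ⟨3 * a + r, 3 * d, by omega, (ternaryZeroOne_three_mul_add hr a).2 ⟨hr1, ha⟩,
          ?_, by ring⟩
        rw [show 3 * a + r + 3 * d = 3 * (a + d) + r by ring]
        exact (ternaryZeroOne_three_mul_add hr _).2 ⟨hr1, had⟩
      · refine ⟨3 * a, 3 * d + 1, by omega, (ternaryZeroOne_three_mul a).2 ha, ?_, by omega⟩
        rw [show 3 * a + (3 * d + 1) = 3 * (a + d) + 1 by ring]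
        exact (ternaryZeroOne_three_mul_add (by norm_num) _).2 ⟨le_rfl, had⟩

/-- For `S = { {d, 2d} : d > 0 }`, the P-positions of the comply-number game are
exactly the nonnegative integers whose base-3 digits are all 0 or 1. -/
theorem complyNum_threeAP_Ppositions (x : ℕ) :
    complyNumP {s : Finset ℕ | ∃ d : ℕ, 0 < d ∧ s = {d, 2 * d}} x ↔
      ∀ c ∈ Nat.digits 3 x, c ≤ 1 :=
  complyNumP_threeAPMoves_iff_of_greedy TernaryZeroOne
    (fun _ _ ha had hawd ↦ by have := ha.eq_of_add_eq_two_mul hawd had (by ring); omega)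
    (fun _ hx ↦ exists_ap_of_not_ternaryZeroOne hx) x
end

section
/- For the comply-number game with move family T = { {d, 2d} : d ∈ A }, where A is the set of nonnegative integers with only base-3 digits 0 and 1 (and d > 0), the set of P-positions is again exactly A. -/
theorem complyNumP_eq_of_forall_iff {S : Set (Finset ℕ)} {Q : ℕ → Prop}
    (hQ : ∀ x, Q x ↔ ∀ s ∈ S, (∀ i ∈ s, i ≤ x) → ∃ i ∈ s, 0 < i ∧ i ≤ x ∧ ¬ Q (x - i)) :
    complyNumP S = Q := by
  funext x
  induction x using Nat.strong_induction_on with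
  | _ x IH =>
    rw [complyNumP, hQ, eq_iff_iff]
    refine forall₂_congr fun s _ => imp_congr_right fun _ => exists_congr fun i => ?_
    simp only [exists_prop]
    refine and_congr_right fun _ => and_congr_right fun hi => and_congr_right fun hix => ?_
    rw [IH (x - i) (by omega)]

theorem forall_pairMoves_iff {D Q : ℕ → Prop} {x : ℕ} :
    (∀ s ∈ {s : Finset ℕ | ∃ d, 0 < d ∧ D d ∧ s = {d, 2 * d}}, (∀ i ∈ s, i ≤ x) →
        ∃ i ∈ s, 0 < i ∧ i ≤ x ∧ ¬ Q (x - i)) ↔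
      ∀ d, 0 < d → D d → 2 * d ≤ x → ¬ (Q (x - d) ∧ Q (x - 2 * d)) := by
  simp only [Set.mem_ofPred_eq, forall_exists_index, and_imp]
  constructor
  · rintro h d hd hD hx ⟨h1, h2⟩
    obtain ⟨i, hi, -, -, hQi⟩ := h _ d hd hD rfl (by simp only [Finset.mem_insert,
      Finset.mem_singleton, forall_eq_or_imp, forall_eq]; omega)
    simp only [Finset.mem_insert, Finset.mem_singleton] at hi
    rcases hi with rfl | rfl <;> contradiction
  · rintro h s d hd hD rfl hx
    have hdx : 2 * d ≤ x := hx _ (by simp)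
    by_cases h1 : Q (x - d)
    · exact ⟨2 * d, by simp, by omega, hdx, fun h2 => h d hd hD hdx ⟨h1, h2⟩⟩
    · exact ⟨d, by simp, hd, by omega, h1⟩

def ZeroOneDigits (b n : ℕ) : Prop := ∀ c ∈ Nat.digits b n, c ≤ 1

theorem zeroOneDigits_iff {b n : ℕ} (hb : 1 < b) :
    ZeroOneDigits b n ↔ n % b ≤ 1 ∧ ZeroOneDigits b (n / b) := by
  rcases Nat.eq_zero_or_pos n with rfl | hn
  · simp [ZeroOneDigits]
  · simp [ZeroOneDigits, Nat.digits_def' hb hn]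

theorem zeroOneDigits_add_mul_iff {b r q : ℕ} (hb : 1 < b) (hr : r < b) :
    ZeroOneDigits b (r + b * q) ↔ r ≤ 1 ∧ ZeroOneDigits b q := by
  rw [zeroOneDigits_iff hb, Nat.add_mul_mod_self_left, Nat.mod_eq_of_lt hr,
    Nat.add_mul_div_left _ _ (by omega), Nat.div_eq_of_lt hr, zero_add]

theorem not_zeroOneDigits_three_ap {a d : ℕ} (hd : 0 < d) (ha : ZeroOneDigits 3 a)
    (had : ZeroOneDigits 3 (a + d)) : ¬ ZeroOneDigits 3 (a + 2 * d) := by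
  induction d using Nat.strong_induction_on generalizing a with
  | _ d IH =>
    intro ha2d
    rw [zeroOneDigits_iff (by norm_num)] at ha had ha2d
    by_cases hd3 : d % 3 = 0
    · refine IH (d / 3) (by omega) (by omega) ha.2 ?_ ?_
      · simpa [show (a + d) / 3 = a / 3 + d / 3 by omega] using had.2
      · simpa [show (a + 2 * d) / 3 = a / 3 + 2 * (d / 3) by omega] using ha2d.2
    · have : a % 3 = 0 ∨ a % 3 = 1 := by omega
      have : d % 3 = 1 ∨ d % 3 = 2 := by omega
      omega

theorem exists_eq_add_two_mul_zeroOneDigits (x : ℕ) :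
    ∃ a d, ZeroOneDigits 3 a ∧ ZeroOneDigits 3 d ∧ ZeroOneDigits 3 (a + d) ∧ x = a + 2 * d := by
  induction x using Nat.strong_induction_on with
  | _ x IH =>
    rcases Nat.eq_zero_or_pos x with rfl | hx
    · exact ⟨0, 0, by simp [ZeroOneDigits]⟩
    obtain ⟨a, d, ha, hd, had, hq⟩ := IH (x / 3) (by omega)
    have h3 : (1 : ℕ) < 3 := by norm_num
    by_cases hr : x % 3 ≤ 1
    · refine ⟨x % 3 + 3 * a, 0 + 3 * d, ?_, ?_, ?_, by omega⟩
      · exact (zeroOneDigits_add_mul_iff h3 (by omega)).2 ⟨hr, ha⟩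
      · exact (zeroOneDigits_add_mul_iff h3 (by omega)).2 ⟨by omega, hd⟩
      · rw [show x % 3 + 3 * a + (0 + 3 * d) = x % 3 + 3 * (a + d) by ring]
        exact (zeroOneDigits_add_mul_iff h3 (by omega)).2 ⟨hr, had⟩
    · refine ⟨0 + 3 * a, 1 + 3 * d, ?_, ?_, ?_, by omega⟩
      · exact (zeroOneDigits_add_mul_iff h3 (by omega)).2 ⟨by omega, ha⟩
      · exact (zeroOneDigits_add_mul_iff h3 (by omega)).2 ⟨le_rfl, hd⟩
      · rw [show 0 + 3 * a + (1 + 3 * d) = 1 + 3 * (a + d) by ring]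
        exact (zeroOneDigits_add_mul_iff h3 (by omega)).2 ⟨le_rfl, had⟩

theorem zeroOneDigits_three_iff_forall (x : ℕ) :
    ZeroOneDigits 3 x ↔ ∀ d, 0 < d → ZeroOneDigits 3 d → 2 * d ≤ x →
      ¬ (ZeroOneDigits 3 (x - d) ∧ ZeroOneDigits 3 (x - 2 * d)) := by
  constructor
  · rintro hx d hd - hdx ⟨h1, h2⟩
    refine not_zeroOneDigits_three_ap hd h2 ?_ ?_
    · rwa [show x - 2 * d + d = x - d by omega]
    · rwa [show x - 2 * d + 2 * d = x by omega]
  · intro h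
    by_contra hx
    obtain ⟨a, d, ha, hd, had, rfl⟩ := exists_eq_add_two_mul_zeroOneDigits x
    have hd0 : 0 < d := Nat.pos_of_ne_zero (by rintro rfl; exact hx (by simpa using ha))
    refine h d hd0 hd (by omega) ⟨?_, ?_⟩
    · rwa [show a + 2 * d - d = a + d by omega]
    · rwa [show a + 2 * d - 2 * d = a by omega]

/-- For the restricted move family `T = { {d, 2d} : d ∈ A, d > 0 }`, where `A` is the
set of integers with only base-3 digits 0 and 1, the set of P-positions is again `A`. -/
theorem complyNum_restricted_Ppositions (x : ℕ) :
    complyNumP {s : Finset ℕ | ∃ d : ℕ, 0 < d ∧ (∀ c ∈ Nat.digits 3 d, c ≤ 1) ∧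
        s = {d, 2 * d}} x ↔
      ∀ c ∈ Nat.digits 3 x, c ≤ 1 := by
  have hP : complyNumP {s : Finset ℕ | ∃ d, 0 < d ∧ ZeroOneDigits 3 d ∧ s = {d, 2 * d}} =
      ZeroOneDigits 3 :=
    complyNumP_eq_of_forall_iff fun y => by
      rw [forall_pairMoves_iff, zeroOneDigits_three_iff_forall]
  exact iff_of_eq (congrFun hP x)
end

section
/- If U ⊊ { {d, 2d} : d ∈ A } is any proper subfamily (A the set of integers with ternary digits 0,1, d ranging over positive elements of A), then the set of P-positions of the comply-number game defined by U contains a nontrivial three-term arithmetic progression. -/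
def doublingMoves : Set (Finset ℕ) := {s | ∃ d, 0 < d ∧ Ternary01 d ∧ s = {d, 2 * d}}

theorem pair_mem_doublingMoves {d : ℕ} (h : {d, 2 * d} ∈ doublingMoves) :
    0 < d ∧ Ternary01 d := by
  obtain ⟨e, he, hT, hs⟩ := h
  have hde : d ∈ ({e, 2 * e} : Finset ℕ) := hs ▸ by simp
  have hed : e ∈ ({d, 2 * d} : Finset ℕ) := hs ▸ by simp
  simp only [Finset.mem_insert, Finset.mem_singleton] at hde hed
  obtain rfl : d = e := by omega
  exact ⟨he, hT⟩

namespace Ternary01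

theorem zero : Ternary01 0 := by simp [Ternary01]

theorem iff_mod_div (n : ℕ) : Ternary01 n ↔ n % 3 ≤ 1 ∧ Ternary01 (n / 3) := by
  rcases Nat.eq_zero_or_pos n with rfl | hn
  · simp [zero]
  · rw [Ternary01, Nat.digits_def' (by norm_num) hn, List.forall_mem_cons, Ternary01]

theorem three_mul_add_iff {m r : ℕ} (hr : r ≤ 1) : Ternary01 (3 * m + r) ↔ Ternary01 m := by
  rw [iff_mod_div]
  have hmod : (3 * m + r) % 3 = r := by omega
  have hdiv : (3 * m + r) / 3 = m := by omega
  simp only [hmod, hdiv, hr, true_and]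

theorem mod_three_le_one {n : ℕ} (h : Ternary01 n) : n % 3 ≤ 1 := ((iff_mod_div n).1 h).1

theorem div_three {n : ℕ} (h : Ternary01 n) : Ternary01 (n / 3) := ((iff_mod_div n).1 h).2

theorem eq_of_add_eq_two_mul_s10 {a b c : ℕ} (ha : Ternary01 a) (hb : Ternary01 b)
    (hc : Ternary01 c) (h : a + c = 2 * b) : a = c := by
  induction b using Nat.strong_induction_on generalizing a c with
  | _ b ih =>
    rcases Nat.eq_zero_or_pos b with rfl | hb0
    · omega
    have := ha.mod_three_le_one
    have := hb.mod_three_le_one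
    have := hc.mod_three_le_one
    have hmod : a % 3 = c % 3 := by omega
    have hdiv : a / 3 + c / 3 = 2 * (b / 3) := by omega
    have := ih (b / 3) (Nat.div_lt_self hb0 (by norm_num)) ha.div_three hb.div_three
      hc.div_three hdiv
    omega

theorem exists_add_two_mul (x : ℕ) :
    ∃ a d, Ternary01 a ∧ Ternary01 (a + d) ∧ Ternary01 d ∧ a + 2 * d = x := by
  induction x using Nat.strong_induction_on with
  | _ x ih =>
    rcases Nat.eq_zero_or_pos x with rfl | hx
    · exact ⟨0, 0, zero, zero, zero, rfl⟩
    obtain ⟨a, d, ha, had, hd, hx3⟩ := ih (x / 3) (Nat.div_lt_self hx (by norm_num))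
    by_cases h2 : x % 3 = 2
    · refine ⟨3 * a + 0, 3 * d + 1, (three_mul_add_iff zero_le_one).2 ha, ?_,
        (three_mul_add_iff le_rfl).2 hd, by omega⟩
      rw [show 3 * a + 0 + (3 * d + 1) = 3 * (a + d) + 1 by ring]
      exact (three_mul_add_iff le_rfl).2 had
    · have hr : x % 3 ≤ 1 := by omega
      refine ⟨3 * a + x % 3, 3 * d + 0, (three_mul_add_iff hr).2 ha, ?_,
        (three_mul_add_iff zero_le_one).2 hd, by omega⟩
      rw [show 3 * a + x % 3 + (3 * d + 0) = 3 * (a + d) + x % 3 by ring]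
      exact (three_mul_add_iff hr).2 had

end Ternary01

section Game

variable {U : Set (Finset ℕ)}

theorem complyNumP_iff (hU : U ⊆ doublingMoves) (x : ℕ) :
    complyNumP U x ↔ ∀ d, {d, 2 * d} ∈ U → 2 * d ≤ x →
      ¬ complyNumP U (x - d) ∨ ¬ complyNumP U (x - 2 * d) := by
  rw [complyNumP]
  constructor
  · intro hP d hd h2d
    have hle : ∀ i ∈ ({d, 2 * d} : Finset ℕ), i ≤ x := by simp only [Finset.mem_insert,
      Finset.mem_singleton, forall_eq_or_imp, forall_eq]; omega
    obtain ⟨i, hi, -, -, hN⟩ := hP _ hd hle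
    rcases Finset.mem_insert.1 hi with rfl | hi
    · exact .inl hN
    · rw [Finset.mem_singleton.1 hi] at hN
      exact .inr hN
  · intro hP s hs hle
    obtain ⟨d, hd, -, rfl⟩ := hU hs
    have h2d : 2 * d ≤ x := hle _ (by simp)
    rcases hP d hs h2d with hN | hN
    · exact ⟨d, by simp, hd, by omega, hN⟩
    · exact ⟨2 * d, by simp, by omega, h2d, hN⟩

variable {n : ℕ} (hU : U ⊆ doublingMoves)
  (hbelow : ∀ d, 0 < d → Ternary01 d → d < n → {d, 2 * d} ∈ U)
include hU hbelow

theorem complyNumP_iff_ternary01 {x : ℕ} (hx : x < 2 * n) :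
    complyNumP U x ↔ Ternary01 x := by
  induction x using Nat.strong_induction_on with
  | _ x ih =>
    have ih' : ∀ y, y < x → (complyNumP U y ↔ Ternary01 y) := fun y hy => ih y hy (by omega)
    rw [complyNumP_iff hU]
    constructor
    · intro hP
      by_contra hxA
      obtain ⟨a, d, ha, had, hd, rfl⟩ := Ternary01.exists_add_two_mul x
      have hd0 : 0 < d := Nat.pos_of_ne_zero fun h => hxA (by simpa [h] using ha)
      have hmove := hP d (hbelow d hd0 hd (by omega)) (by omega)
      rw [ih' _ (by omega), ih' _ (by omega), show a + 2 * d - d = a + d by omega,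
        show a + 2 * d - 2 * d = a by omega] at hmove
      tauto
    · intro hxA d hmove h2d
      obtain ⟨hd0, hd⟩ := pair_mem_doublingMoves (hU hmove)
      rw [ih' _ (by omega), ih' _ (by omega)]
      by_contra! hboth
      have := Ternary01.eq_of_add_eq_two_mul_s10 hboth.2 hboth.1 hxA (by omega)
      omega

theorem complyNumP_two_mul (hn : Ternary01 n) (hmissing : {n, 2 * n} ∉ U) :
    complyNumP U (2 * n) := by
  rw [complyNumP_iff hU]
  intro d hmove h2d
  obtain ⟨hd0, hd⟩ := pair_mem_doublingMoves (hU hmove)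
  have hdn : d < n := lt_of_le_of_ne (by omega) (by rintro rfl; exact hmissing hmove)
  left
  rw [complyNumP_iff_ternary01 hU hbelow (by omega)]
  intro hA
  have := Ternary01.eq_of_add_eq_two_mul_s10 hd hn hA (by omega)
  omega

end Game

/-- If `U` is a proper subfamily of `T = { {d, 2d} : d ∈ A, d > 0 }` (`A` the set of
integers with ternary digits 0, 1), then the P-positions of the comply-number game on
`U` contain a nontrivial three-term arithmetic progression. -/
theorem proper_restriction_has_threeAP (U : Set (Finset ℕ))
    (hsub : U ⊆ {s : Finset ℕ | ∃ d : ℕ, 0 < d ∧ (∀ c ∈ Nat.digits 3 d, c ≤ 1) ∧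
        s = {d, 2 * d}})
    (hne : U ≠ {s : Finset ℕ | ∃ d : ℕ, 0 < d ∧ (∀ c ∈ Nat.digits 3 d, c ≤ 1) ∧
        s = {d, 2 * d}}) :
    ∃ x d : ℕ, 0 < d ∧ 2 * d ≤ x ∧
      complyNumP U (x - 2 * d) ∧ complyNumP U (x - d) ∧ complyNumP U x := by
  classical
  have hU : U ⊆ doublingMoves := hsub
  have hmissing : ∃ d, 0 < d ∧ Ternary01 d ∧ {d, 2 * d} ∉ U := by
    obtain ⟨s, ⟨d, hd0, hd, rfl⟩, hs⟩ := Set.exists_of_ssubset (hsub.ssubset_of_ne hne)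
    exact ⟨d, hd0, hd, hs⟩
  set n := Nat.find hmissing
  obtain ⟨hn0, hn, hnU⟩ : 0 < n ∧ Ternary01 n ∧ {n, 2 * n} ∉ U := Nat.find_spec hmissing
  have hbelow : ∀ d, 0 < d → Ternary01 d → d < n → {d, 2 * d} ∈ U :=
    fun d hd0 hd hdn => by_contra fun hdU => Nat.find_min hmissing hdn ⟨hd0, hd, hdU⟩
  refine ⟨2 * n, n, hn0, le_rfl, ?_, ?_, complyNumP_two_mul hU hbelow hn hnU⟩
  · rw [Nat.sub_self, complyNumP_iff_ternary01 hU hbelow (by omega)]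
    exact Ternary01.zero
  · rw [show 2 * n - n = n by omega, complyNumP_iff_ternary01 hU hbelow (by omega)]
    exact hn
end

section
/- For any family S of nonempty finite sets of positive integers, a heap size x is a P-position of the comply-set game defined by S if and only if x is an N-position of the comply-number game defined by S. -/
/-- P-positions of the comply-set game defined by `S`: `x` is P iff there is an
applicable `s ∈ S` all of whose options `x - i` are N (equivalently, non-P). -/
def complySetP (S : Set (Finset ℕ)) : ℕ → Prop
  | x => ∃ s, ∃ _ : s ∈ S, (∀ i ∈ s, i ≤ x) ∧
      ∀ i, i ∈ s → ∀ _ : 0 < i, ∀ _ : i ≤ x, ¬ complySetP S (x - i)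
termination_by x => x
decreasing_by all_goals omega

-- The two recursions are De Morgan duals: negating the `∀ s, ∃ i` of `complyNumP` gives
-- the `∃ s, ∀ i` of `complySetP`, with the outcomes of the options swapped.
theorem complySetP_iff_not_complyNumP_of_forall_lt {S : Set (Finset ℕ)} {x : ℕ}
    (ih : ∀ y < x, complySetP S y ↔ ¬ complyNumP S y) :
    complySetP S x ↔ ¬ complyNumP S x := by
  rw [complySetP, complyNumP]
  push Not
  simp only [exists_prop]
  refine exists_congr fun s => and_congr_right fun _ => and_congr_right fun _ =>
    forall₄_congr fun i _ hi _ => ?_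
  rw [ih (x - i) (by omega), not_not]

theorem complySetP_iff_not_complyNumP_general (S : Set (Finset ℕ)) (x : ℕ) :
    complySetP S x ↔ ¬ complyNumP S x := by
  induction x using Nat.strong_induction_on with
  | _ x ih => exact complySetP_iff_not_complyNumP_of_forall_lt ih

/-- For any family of nonempty finite sets of positive integers, a heap size is a
P-position of the comply-set game iff it is an N-position of the comply-number game. -/
theorem complySetP_iff_not_complyNumP (S : Set (Finset ℕ))
    (hne : ∀ s ∈ S, s.Nonempty) (hpos : ∀ s ∈ S, ∀ i ∈ s, 0 < i) (x : ℕ) :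
    complySetP S x ↔ ¬ complyNumP S x :=
  complySetP_iff_not_complyNumP_general S x
end

section
/- Let C be the greedy set avoiding solutions of x + z = 3y, starting from 1: n ∈ C iff there is no pair of elements a, b ∈ C with a < n such that {a, b, n} contains a solution of u + w = 3v, with all of u, v, w in C ∪ {n} and the solution involving n. Then every positive integer congruent to 1 mod 3 belongs to C, and no positive integer congruent to 2 mod 3 belongs to C. -/
/-- The greedy set avoiding solutions of `x + z = 3 * y`, starting from 1:
a candidate `n` is rejected iff adding `n` to the set creates a (not-all-equal)
solution `u + w = 3 * v` with `u, v, w` in the set together with `n` and `n`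
among `u, v, w`. -/
def greedyC : ℕ → Prop
  | n => 1 ≤ n ∧
      ¬ ∃ a, ∃ _ : a < n, ∃ b, ∃ _ : b < n, greedyC a ∧ greedyC b ∧
        (a + b = 3 * n ∨ a + n = 3 * b ∨ n + n = 3 * a)
termination_by n => n
decreasing_by all_goals omega

lemma greedyC_pos {n : ℕ} (h : greedyC n) : 1 ≤ n := by
  rw [greedyC] at h; exact h.1

lemma greedyC_one : greedyC 1 := by
  rw [greedyC]
  refine ⟨le_refl 1, ?_⟩
  rintro ⟨a, ha, b, hb, hga, -, -⟩
  have := greedyC_pos hga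
  omega

lemma not_greedyC_two : ¬ greedyC 2 := by
  intro h
  rw [greedyC] at h
  exact h.2 ⟨1, by omega, 1, by omega, greedyC_one, greedyC_one, by omega⟩

lemma greedyC_three : greedyC 3 := by
  rw [greedyC]
  refine ⟨by omega, ?_⟩
  rintro ⟨a, ha, b, hb, hga, hgb, h⟩
  have ha1 := greedyC_pos hga
  have hb1 := greedyC_pos hgb
  have hA : a = 1 := by
    rcases (by omega : a = 1 ∨ a = 2) with h' | h'
    · exact h'
    · exact absurd (h' ▸ hga) not_greedyC_two
  have hB : b = 1 := by
    rcases (by omega : b = 1 ∨ b = 2) with h' | h'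
    · exact h'
    · exact absurd (h' ▸ hgb) not_greedyC_two
  omega

/-- Every positive integer congruent to 1 mod 3 belongs to the greedy
`x + z = 3y`-avoiding set, and none congruent to 2 mod 3 does. -/
theorem greedyC_mod_three (n : ℕ) (hn : 0 < n) :
    (n % 3 = 1 → greedyC n) ∧ (n % 3 = 2 → ¬ greedyC n) := by
  induction n using Nat.strong_induction_on with
  | _ n ih =>
  constructor
  · intro h1
    rw [greedyC]
    refine ⟨by omega, ?_⟩
    rintro ⟨a, ha, b, hb, hga, hgb, h⟩
    have ha1 := greedyC_pos hga
    have hb1 := greedyC_pos hgb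
    rcases h with h | h | h
    · omega
    · have ha2 : a % 3 = 2 := by omega
      exact (ih a ha (by omega)).2 ha2 hga
    · omega
  · intro h2 hC
    rw [greedyC] at hC
    apply hC.2
    rcases (by omega : n % 9 = 2 ∨ n % 9 = 5 ∨ n % 9 = 8) with h9 | h9 | h9
    · -- witnesses a = 1, b = (n+1)/3
      refine ⟨1, by omega, (n + 1) / 3, by omega, greedyC_one, ?_, by omega⟩
      exact (ih _ (by omega) (by omega)).1 (by omega)
    · rcases eq_or_ne n 5 with rfl | hne
      · exact ⟨4, by omega, 3, by omega,
          (ih 4 (by omega) (by omega)).1 (by omega), greedyC_three, by omega⟩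
      · have h14 : 14 ≤ n := by omega
        refine ⟨7, by omega, (n + 7) / 3, by omega, ?_, ?_, by omega⟩
        · exact (ih 7 (by omega) (by omega)).1 (by omega)
        · exact (ih _ (by omega) (by omega)).1 (by omega)
    · have h8 : 8 ≤ n := by omega
      refine ⟨4, by omega, (n + 4) / 3, by omega, ?_, ?_, by omega⟩
      · exact (ih 4 (by omega) (by omega)).1 (by omega)
      · exact (ih _ (by omega) (by omega)).1 (by omega)
end

section
/- Let ac be an arithmetic condition in k variables and let π_g : ℕ → ℕ be the greedy injection avoiding the max-restricted condition (π_g(0) = 0, and π_g(n) is the least value distinct from all earlier values such that whenever x_1, ..., x_{k−1} < n satisfy ac together with n, and π_g(x_i) < π_g(n) for all i, the images do not satisfy ac). Then π_g is an involution: π_g(π_g(n)) = n for all n. -/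
/-- `m` is an admissible value for `π` at step `n` (max-restricted avoidance of the
arithmetic condition `ac` in `k` variables): `m` differs from all earlier values, and
whenever a tuple with `n` in one slot and all other entries `< n` satisfies `ac` and
all other image values are `< m`, the image tuple (with `m` in `n`'s slot) does not
satisfy `ac`. -/
def Admiss (k : ℕ) (ac : (Fin k → ℕ) → Prop) (π : ℕ → ℕ) (n m : ℕ) : Prop :=
  (∀ j, j < n → π j ≠ m) ∧
  ∀ (v : Fin k → ℕ) (j : Fin k), v j = n → (∀ i, i ≠ j → v i < n) →
    ac v → (∀ i, i ≠ j → π (v i) < m) →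
      ¬ ac (fun i => if i = j then m else π (v i))

/-!
Strong induction on `n`. The only nontrivial case is `n < π n`. Since `π` is an involution
below `n`, the max-restricted constraint is symmetric under `x ↦ π x` there: a forbidden
pattern created by choosing `n` at step `π n` is mapped by `π` to a pattern that choosing
`π n` at step `n` would have created. Hence `n` is admissible at step `π n`, so
`π (π n) ≤ n`, and `π (π n) < n` is excluded by injectivity.
-/

def IsGreedy (k : ℕ) (ac : (Fin k → ℕ) → Prop) (π : ℕ → ℕ) : Prop :=
  ∀ n, 0 < n → Admiss k ac π n (π n) ∧ ∀ m, m < π n → ¬ Admiss k ac π n m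

variable {k : ℕ} {ac : (Fin k → ℕ) → Prop} {π : ℕ → ℕ}

/-- Read through `π`, which is involutive on the other entries of `v`, the image tuple is a
pattern at step `a` whose image is `v`; admissibility of `b` at step `a` forbids this. -/
theorem Admiss.not_ac_of_ac_image {a b : ℕ} (h : Admiss k ac π a b) {v : Fin k → ℕ}
    {j : Fin k} (hvj : v j = b) (hlt : ∀ i, i ≠ j → v i < b)
    (hπlt : ∀ i, i ≠ j → π (v i) < a) (hinv : ∀ i, i ≠ j → π (π (v i)) = v i)
    (himage : ac (fun i => if i = j then a else π (v i))) : ¬ ac v := by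
  intro hv
  refine h.2 _ j (if_pos rfl) (fun i hi => by simpa [hi] using hπlt i hi) himage
    (fun i hi => by simpa [hi, hinv i hi] using hlt i hi) ?_
  convert hv using 1
  funext i
  by_cases hi : i = j
  · simp [hi, hvj]
  · simp [hi, hinv i hi]

namespace IsGreedy

theorem injective (hπ : IsGreedy k ac π) : Function.Injective π := by
  intro a b hab
  by_contra hne
  rcases Nat.lt_or_gt_of_ne hne with h | h
  · exact (hπ b (by omega)).1.1 a h hab
  · exact (hπ a (by omega)).1.1 b h hab.symm

variable {n : ℕ}

/-- `j` was skipped at step `n`, so some constraint forbids it there; transported by `π`,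
that constraint forbids the value `n` at step `j`. -/
theorem apply_ne_of_lt_of_lt (hπ : IsGreedy k ac π) (hn : 0 < n)
    (hinv : ∀ m, m < n → π (π m) = m) {j : ℕ} (hnj : n < j) (hj : j < π n) : π j ≠ n := by
  intro hjn
  apply (hπ n hn).2 j hj
  refine ⟨fun i hi hij => by have := hinv i hi; rw [hij, hjn] at this; omega, ?_⟩
  intro v j₀ hvj hlt hv hπlt himage
  have hadm : Admiss k ac π j n := hjn ▸ (hπ j (by omega)).1
  exact hadm.not_ac_of_ac_image hvj hlt hπlt (fun i hi => hinv _ (hlt i hi)) himage hv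

theorem admiss_of_lt_apply (hπ : IsGreedy k ac π) (hn : 0 < n)
    (hinv : ∀ m, m < n → π (π m) = m) (hnπ : n < π n) : Admiss k ac π (π n) n := by
  refine ⟨fun j hj hjn => ?_, ?_⟩
  · rcases lt_trichotomy j n with hjn' | rfl | hnj
    · have := hinv j hjn'
      rw [hjn] at this
      omega
    · omega
    · exact hπ.apply_ne_of_lt_of_lt hn hinv hnj hj hjn
  · intro w j₁ hwj hlt hw hπlt himage
    have hinv' : ∀ i, i ≠ j₁ → π (π (w i)) = w i :=
      fun i hi => hπ.injective (hinv _ (hπlt i hi))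
    exact (hπ n hn).1.not_ac_of_ac_image hwj hlt hπlt hinv' himage hw

theorem apply_apply (hπ : IsGreedy k ac π) (h0 : π 0 = 0) (n : ℕ) : π (π n) = n := by
  induction n using Nat.strong_induction_on with
  | _ n hinv =>
    rcases lt_trichotomy (π n) n with h | h | h
    · exact hπ.injective (hinv (π n) h)
    · rw [h, h]
    · have hn : 0 < n := Nat.pos_of_ne_zero fun hn => by simp [hn, h0] at h
      have hle : π (π n) ≤ n :=
        not_lt.1 fun hlt => (hπ (π n) (by omega)).2 n hlt (hπ.admiss_of_lt_apply hn hinv h)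
      have hne : ¬ π (π n) < n := fun hlt => by
        have := hπ.injective (hπ.injective (hinv _ hlt))
        omega
      omega

end IsGreedy

/-- The greedy injection avoiding the max-restricted arithmetic condition `ac`
(`π 0 = 0`, and `π n` is the least admissible value at each step `n > 0`) is an
involution. -/
theorem greedy_maxac_involution (k : ℕ) (ac : (Fin k → ℕ) → Prop) (π : ℕ → ℕ)
    (h0 : π 0 = 0)
    (hgreedy : ∀ n, 0 < n →
      Admiss k ac π n (π n) ∧ ∀ m, m < π n → ¬ Admiss k ac π n m) :
    ∀ n, π (π n) = n :=
  IsGreedy.apply_apply hgreedy h0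
end

section
/- Let π : ℕ → ℕ be an injection avoiding three-term arithmetic progressions in the symmetric (order-preserving) sense, i.e., there are no x < y < z with x + z = 2y, π(x) < π(y) < π(z), and π(x) + π(z) = 2π(y). If additionally π is the greedy such injection (π(n) is minimal subject to avoiding collisions and such monotone image progressions), then π is an involution: π(π(n)) = n for all n. -/
/-- Admissibility of value `m` at step `n` for the greedy injection avoiding
symmetric (order-preserving/max) three-term arithmetic progressions: `m` differs from
all earlier values; for every AP `x, y, n` (`x + n = 2 * y`) with `x, y < n` and both
image values below `m`, the images do not form an AP with `m` as largest term; and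
similarly when `n` sits in the middle of the AP (`x + y = 2 * n`). -/
def Adm3 (π : ℕ → ℕ) (n m : ℕ) : Prop :=
  (∀ j, j < n → π j ≠ m) ∧
  (∀ x y, x < n → y < n → x + n = 2 * y → π x < m → π y < m → π x + m ≠ 2 * π y) ∧
  (∀ x y, x < n → y < n → x + y = 2 * n → π x < m → π y < m → π x + π y ≠ 2 * m)

/-- The "bad" condition: adding value `m` at step `n` would create a monotone AP
with `n` as largest index and `m` as largest value. -/
def Bad3 (π : ℕ → ℕ) (n m : ℕ) : Prop :=
  ∃ x y, x < n ∧ y < n ∧ x + n = 2 * y ∧ π x < m ∧ π y < m ∧ π x + m = 2 * π y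

lemma adm3_iff (π : ℕ → ℕ) (n m : ℕ) :
    Adm3 π n m ↔ (∀ j, j < n → π j ≠ m) ∧ ¬ Bad3 π n m := by
  constructor
  · rintro ⟨h1, h2, _⟩
    exact ⟨h1, fun ⟨x, y, hx, hy, hxy, h4, h5, h6⟩ => h2 x y hx hy hxy h4 h5 h6⟩
  · rintro ⟨h1, h2⟩
    refine ⟨h1, fun x y hx hy hxy h4 h5 h6 => h2 ⟨x, y, hx, hy, hxy, h4, h5, h6⟩, ?_⟩
    intro x y hx hy hxy
    omega

/-- The greedy injection avoiding three-term arithmetic progressions in the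
symmetric (order-preserving/max) sense is an involution. -/
theorem greedy_threeAP_involution (π : ℕ → ℕ) (h0 : π 0 = 0)
    (hgreedy : ∀ n, 0 < n → Adm3 π n (π n) ∧ ∀ m, m < π n → ¬ Adm3 π n m) :
    ∀ n, π (π n) = n := by
  -- π is injective
  have hinj : ∀ i j, π i = π j → i = j := by
    intro i j hij
    by_contra hne
    rcases Nat.lt_or_ge i j with h | h
    · exact ((hgreedy j (by omega)).1.1 i h) hij
    · have h' : j < i := by omega
      exact ((hgreedy i (by omega)).1.1 j h') hij.symm
  -- a value below π m that is unused at step m must be bad at step m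
  have hinadm : ∀ m v, 0 < m → v < π m → (∀ i, i < m → π i ≠ v) → Bad3 π m v := by
    intro m v hm hv hunused
    have h := (hgreedy m hm).2 v hv
    rw [adm3_iff] at h
    by_contra hb
    exact h ⟨hunused, hb⟩
  -- the bad condition is symmetric under mirroring inside a symmetric box
  have mirror : ∀ N a b, a ≤ N → b ≤ N →
      (∀ j k, j < N → k < N → π j = k → π k = j) →
      Bad3 π a b → Bad3 π b a := by
    rintro N a b ha hb hA ⟨x, y, hx, hy, hxy, h4, h5, h6⟩
    have hxx : π (π x) = x := hA x (π x) (by omega) (by omega) rfl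
    have hyy : π (π y) = y := hA y (π y) (by omega) (by omega) rfl
    exact ⟨π x, π y, h4, h5, h6, by omega, by omega, by omega⟩
  -- box-symmetry invariant
  have boxinv : ∀ n, ∀ j k, j < n → k < n → π j = k → π k = j := by
    intro n
    induction n with
    | zero => intro j k hj hk hjk; omega
    | succ n ih =>
      -- key lemma: a small index with large value and unused mirror value is bad at n
      have L : ∀ m, m < n → n < π m → (∀ i, i < m → π i ≠ n) → Bad3 π n m := by
        intro m hm hpm hun
        have hm0 : 0 < m := by
          rcases Nat.eq_zero_or_pos m with h | h
          · subst h; omega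
          · exact h
        exact mirror n m n (by omega) le_rfl ih (hinadm m n hm0 hpm hun)
      -- if some earlier index already has value n, the greedy choice at n is that index
      have case1 : ∀ j, j < n → π j = n → π n = j := by
        intro j hj hjn
        have hn0 : 0 < n := by omega
        have hj0 : 0 < j := by
          rcases Nat.eq_zero_or_pos j with h | h
          · subst h; omega
          · exact h
        have hadmj : Adm3 π n j := by
          rw [adm3_iff]
          constructor
          · intro i hi hij
            have := ih i j hi hj hij
            omega
          · rintro ⟨x, y, hx, hy, hxy, h4, h5, h6⟩
            have hxx : π (π x) = x := ih x (π x) hx (by omega) rfl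
            have hyy : π (π y) = y := ih y (π y) hy (by omega) rfl
            have hbjn : Bad3 π j n :=
              ⟨π x, π y, h4, h5, h6, by omega, by omega, by omega⟩
            have hadm := (hgreedy j hj0).1
            rw [adm3_iff, hjn] at hadm
            exact hadm.2 hbjn
        have hnotlt : ∀ m, m < j → ¬ Adm3 π n m := by
          intro m hmj
          rw [adm3_iff]
          rintro ⟨hunused, hnb⟩
          have hpm : n < π m := by
            rcases Nat.lt_trichotomy (π m) n with h | h | h
            · have h1 : π (π m) = m := ih m (π m) (by omega) h rfl
              exact absurd h1 (hunused (π m) h)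
            · exact absurd (hinj m j (by rw [h, hjn])) (by omega)
            · exact h
          have hb := L m (by omega) hpm (by
            intro i hi hin
            exact absurd (hinj i j (by rw [hin, hjn])) (by omega))
          exact hnb hb
        rcases Nat.lt_trichotomy (π n) j with h | h | h
        · exact absurd (hgreedy n hn0).1 (hnotlt (π n) h)
        · exact h
        · exact absurd hadmj ((hgreedy n hn0).2 j h)
      intro j k hj hk hjk
      rcases Nat.lt_or_ge j n with hjn | hjn
      · rcases Nat.lt_or_ge k n with hkn | hkn
        · exact ih j k hjn hkn hjk
        · have hk' : k = n := by omega
          subst hk'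
          exact case1 j hjn hjk
      · have hj' : j = n := by omega
        rw [hj'] at hjk ⊢
        rcases Nat.lt_or_ge k n with hkn | hkn
        · -- π n = k < n; show π k = n
          by_cases hex : ∃ i, i < n ∧ π i = n
          · obtain ⟨i, hi, hin⟩ := hex
            have h1 := case1 i hi hin
            have h2 : k = i := by omega
            rw [h2]; exact hin
          · push_neg at hex
            by_contra hne
            have hpk : n < π k := by
              rcases Nat.lt_trichotomy (π k) n with h | h | h
              · have h1 : π (π k) = k := ih k (π k) hkn h rfl
                have h2 : π k = n := hinj (π k) n (by rw [h1, hjk])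
                omega
              · exact absurd h hne
              · exact h
            have hb := L k hkn hpk (fun i hi => hex i (by omega))
            have hadm := (hgreedy n (by omega)).1
            rw [adm3_iff, hjk] at hadm
            exact hadm.2 hb
        · have hk' : k = n := by omega
          rw [hk'] at hjk ⊢
          exact hjk
  intro n
  exact boxinv (max n (π n) + 1) n (π n) (by omega) (by omega) rfl
end
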